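/- Fix integers b ≥ 2, e ≥ 1, u ≥ 1, a positive integer h, and let g be a positive integer such that every nonnegative integer is the sum of g e-th powers of nonnegative integers. Suppose σ is the least height-h, u-attracted number for base b and exponent e, and τ is the least height-h, u-attracted number strictly greater than σ. If σ + g·(b-1)^e ≤ τ, then the least height-(h+1), u-attracted number σ' exists and satisfies S_{e,b}(σ') = σ. -/

import Mathlib

/-- `S e b x` is the sum of the `e`-th powers of the base-`b` digits of `x`. -/
def S (e b x : ℕ) : ℕ := ((Nat.digits b x).map (fun a => a ^ e)).sum

/-- `x` is a height-`h`, `u`-attracted number for base `b` and exponent `e`. -/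
def IsHeightAttracted (e b u h x : ℕ) : Prop :=
  0 < x ∧ (S e b)^[h] x = u ∧ ∀ n < h, (S e b)^[n] x ≠ u

/-! The least height-`(h+1)` number `σ'` has `S σ'` of height `h`, so `S σ' = σ` or
`S σ' ≥ τ ≥ σ + g (b-1)^e`. Write `σ = q (b-1)^e + r` with `r` a sum of `g` `e`-th powers
of numbers `< b - 1`; these and `q` copies of `b - 1` are the digits of a number `x` with
`S x = σ` and fewer digits than any `z` with `S z ≥ σ + g (b-1)^e`. If `x ≠ u` it undercuts
`σ'`; if `x = u`, a rotation of its digits does, or `b x` when all its digits agree. -/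

variable {b e : ℕ}

lemma S_zero : S e b 0 = 0 := by simp [S]

lemma S_pos {z : ℕ} (hz : z ≠ 0) : 0 < S e b z := by
  have hne := (Nat.digits_ne_nil_iff_ne_zero (b := b)).mpr hz
  calc 0 < (Nat.digits b z).getLast hne ^ e :=
      pow_pos (Nat.pos_of_ne_zero (Nat.getLast_digit_ne_zero b hz)) e
    _ ≤ S e b z :=
      List.single_le_sum (fun _ _ => Nat.zero_le _) _ (List.mem_map_of_mem (List.getLast_mem hne))

lemma S_add_base_mul (hb : 2 ≤ b) (he : e ≠ 0) {d : ℕ} (hd : d < b) (z : ℕ) :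
    S e b (d + b * z) = d ^ e + S e b z := by
  by_cases hdz : d ≠ 0 ∨ z ≠ 0
  · simp [S, Nat.digits_add b (by omega) d z hd hdz]
  · obtain ⟨rfl, rfl⟩ : d = 0 ∧ z = 0 := by tauto
    simp [S_zero, he]

lemma S_base_mul (hb : 2 ≤ b) (he : e ≠ 0) (z : ℕ) : S e b (b * z) = S e b z := by
  simpa [he] using S_add_base_mul hb he (d := 0) (by omega) z

lemma S_add_base_pow_mul (hb : 2 ≤ b) (he : e ≠ 0) {N x : ℕ} (hx : x < b ^ N) (y : ℕ) :
    S e b (x + b ^ N * y) = S e b x + S e b y := by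
  induction N generalizing x with
  | zero => simp_all [S_zero]
  | succ N ih =>
    have hxb : x / b < b ^ N := by
      rw [Nat.div_lt_iff_lt_mul (by omega)]; rwa [← pow_succ]
    have hmod : x % b < b := Nat.mod_lt x (by omega)
    have hSx : S e b x = (x % b) ^ e + S e b (x / b) := by
      conv_lhs => rw [← Nat.mod_add_div x b]
      exact S_add_base_mul hb he hmod _
    calc S e b (x + b ^ (N + 1) * y) = S e b (x % b + b * (x / b + b ^ N * y)) := by
          congr 1; rw [pow_succ']; nth_rw 1 [← Nat.mod_add_div x b]; ring
      _ = S e b x + S e b y := by rw [S_add_base_mul hb he hmod, ih hxb, hSx, add_assoc]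

lemma S_le_mul_of_lt_pow (hb : 2 ≤ b) {N z : ℕ} (hz : z < b ^ N) : S e b z ≤ N * (b - 1) ^ e := by
  have hlen := (Nat.digits_length_le_iff (by omega) z).mpr hz
  have hdig : ∀ c ∈ (Nat.digits b z).map (· ^ e), c ≤ (b - 1) ^ e := by
    simp only [List.mem_map]
    rintro _ ⟨d, hd, rfl⟩
    exact Nat.pow_le_pow_left (by have := Nat.digits_lt_base (by omega) hd; omega) e
  calc S e b z ≤ ((Nat.digits b z).map (· ^ e)).length • (b - 1) ^ e :=
        List.sum_le_card_nsmul _ _ hdig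
    _ ≤ N * (b - 1) ^ e := by rw [List.length_map, smul_eq_mul]; exact Nat.mul_le_mul_right _ hlen

lemma pow_le_of_mul_lt_S (hb : 2 ≤ b) {N z : ℕ} (h : N * (b - 1) ^ e < S e b z) : b ^ N ≤ z := by
  by_contra! hz
  exact absurd (S_le_mul_of_lt_pow hb hz) (not_le.mpr h)

lemma S_le_of_lt_pow_succ (hb : 2 ≤ b) (he : e ≠ 0) {N z : ℕ} (hz : z < b ^ (N + 1)) :
    S e b z ≤ N * (b - 1) ^ e + (z / b ^ N) ^ e := by
  have hpos : 0 < b ^ N := by positivity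
  have htop : z / b ^ N < b := by rw [Nat.div_lt_iff_lt_mul hpos]; rwa [← pow_succ']
  rw [← Nat.mod_add_div z (b ^ N), S_add_base_pow_mul hb he (Nat.mod_lt z hpos),
    Nat.mod_add_div z (b ^ N)]
  have hSdigit : S e b (z / b ^ N) = (z / b ^ N) ^ e := by
    simpa [S_zero] using S_add_base_mul hb he htop 0
  rw [hSdigit]
  exact Nat.add_le_add_right (S_le_mul_of_lt_pow hb (Nat.mod_lt z hpos)) _

lemma eq_pow_sub_one_of_mul_le_S (hb : 2 ≤ b) (he : e ≠ 0) {N z : ℕ} (hz : z < b ^ N)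
    (h : N * (b - 1) ^ e ≤ S e b z) : z = b ^ N - 1 := by
  induction N generalizing z with
  | zero => simpa using hz
  | succ N ih =>
    have hw : z / b < b ^ N := by rw [Nat.div_lt_iff_lt_mul (by omega)]; rwa [← pow_succ]
    have hd : z % b < b := Nat.mod_lt z (by omega)
    rw [← Nat.mod_add_div z b, S_add_base_mul hb he hd, add_mul, one_mul] at h
    have hSw := S_le_mul_of_lt_pow (e := e) hb hw
    have hdigit : z % b = b - 1 := by
      by_contra hne
      have := Nat.pow_lt_pow_left (Nat.lt_of_le_of_ne (Nat.le_sub_one_of_lt hd) hne) he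
      omega
    rw [hdigit] at h
    have hrest := ih hw (by omega)
    have hP : 1 ≤ b ^ N := Nat.one_le_pow _ _ (by omega)
    rw [← Nat.mod_add_div z b, hdigit, hrest, pow_succ', Nat.mul_sub_one]
    have : b ≤ b * b ^ N := Nat.le_mul_of_pos_right b hP
    omega

lemma digits_ofDigits_of_pos (hb : 2 ≤ b) {L : List ℕ} (hL : ∀ c ∈ L, 0 < c ∧ c < b) :
    Nat.digits b (Nat.ofDigits b L) = L :=
  Nat.digits_ofDigits b (by omega) L (fun c hc => (hL c hc).2)
    (fun hne => (hL _ (List.getLast_mem hne)).1.ne')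

lemma S_ofDigits (hb : 2 ≤ b) {L : List ℕ} (hL : ∀ c ∈ L, 0 < c ∧ c < b) :
    S e b (Nat.ofDigits b L) = (L.map (· ^ e)).sum := by
  rw [S, digits_ofDigits_of_pos hb hL]

lemma sub_one_mul_ofDigits_replicate_add (hb : 1 ≤ b) (d n : ℕ) :
    (b - 1) * Nat.ofDigits b (List.replicate n d) + d = d * b ^ n := by
  obtain ⟨c, rfl⟩ : ∃ c, b = c + 1 := ⟨b - 1, by omega⟩
  simp only [Nat.add_sub_cancel]
  induction n with
  | zero => simp
  | succ n ih =>
    rw [List.replicate_succ, Nat.ofDigits_cons, pow_succ']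
    linear_combination (c + 1) * ih

lemma eq_one_of_forall_exists_pow_eq (h : ∀ m : ℕ, ∃ f : Fin 1 → ℕ, ∑ i, f i ^ e = m) : e = 1 := by
  obtain ⟨f, hf⟩ := h 2
  rw [Fin.sum_univ_one] at hf
  exact (Nat.prime_two.pow_eq_iff.mp hf).2

lemma exists_ne_S_eq (hb : 2 ≤ b) (he : e ≠ 0) {σ : ℕ} (hσ : σ ≠ 0) (u : ℕ) :
    ∃ y, y ≠ u ∧ S e b y = σ := by
  have hL : ∀ c ∈ List.replicate σ 1, 0 < c ∧ c < b := by
    intro c hc; rw [List.eq_of_mem_replicate hc]; omega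
  set x := Nat.ofDigits b (List.replicate σ 1)
  have hx : S e b x = σ := by simp [x, S_ofDigits hb hL]
  have hbx : S e b (b * x) = σ := by rw [S_base_mul hb he, hx]
  have hxpos : 0 < x := Nat.pos_of_ne_zero fun h0 => hσ (by rw [← hx, h0, S_zero])
  by_cases hxu : x = u
  · exact ⟨b * x, fun h => by nlinarith, hbx⟩
  · exact ⟨x, hxu, hx⟩

lemma exists_sum_pow_eq_of_lt {g : ℕ} (he : e ≠ 0)
    (hwaring : ∀ m : ℕ, ∃ f : Fin g → ℕ, ∑ i, f i ^ e = m) {m : ℕ} (hm : m < (b - 1) ^ e) :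
    ∃ G : List ℕ, (∀ c ∈ G, 0 < c ∧ c < b - 1) ∧ G.length ≤ g ∧ (G.map (· ^ e)).sum = m := by
  obtain ⟨f, hf⟩ := hwaring m
  have hsum : ((List.ofFn f).map (· ^ e)).sum = m := by
    rw [List.map_ofFn, List.sum_ofFn]; exact hf
  refine ⟨(List.ofFn f).filter (· ≠ 0), ?_, ?_, ?_⟩
  · intro c hc
    have hc0 : c ≠ 0 := by simpa using List.of_mem_filter hc
    have hcm : c ^ e ≤ m := by
      rw [← hsum]
      exact List.single_le_sum (fun _ _ => Nat.zero_le _) _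
        (List.mem_map_of_mem (List.mem_of_mem_filter hc))
    refine ⟨Nat.pos_of_ne_zero hc0, ?_⟩
    by_contra! hcb
    have := Nat.pow_le_pow_left hcb e
    omega
  · exact (List.length_filter_le _ _).trans (List.length_ofFn).le
  · have hzeros : (((List.ofFn f).filter (fun c => ¬ c ≠ 0)).map (· ^ e)).sum = 0 :=
      List.sum_eq_zero fun x hx => by
        obtain ⟨c, hc, rfl⟩ := List.mem_map.mp hx
        have hc0 : c = 0 := by simpa using (List.mem_filter.mp hc).2
        simp [hc0, he]
    have := List.sum_map_filter_add_sum_map_filter_not (· ≠ 0) (· ^ e) (List.ofFn f)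
    rwa [hzeros, add_zero, hsum] at this

lemma exists_digits_sum_pow_eq {g : ℕ} (hb : 2 ≤ b) (he : e ≠ 0) (hg : 1 ≤ g)
    (hwaring : ∀ m : ℕ, ∃ f : Fin g → ℕ, ∑ i, f i ^ e = m) (σ : ℕ) :
    ∃ L : List ℕ, (∀ c ∈ L, 0 < c ∧ c < b) ∧ (L.map (· ^ e)).sum = σ ∧
      L.countP (· ≠ b - 1) ≤ g ∧ L.length * (b - 1) ^ e < σ + g * (b - 1) ^ e := by
  set M := (b - 1) ^ e
  have hM : 0 < M := pow_pos (by omega) e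
  obtain ⟨G, hGdig, hGlen, hGsum⟩ := exists_sum_pow_eq_of_lt (b := b) he hwaring (Nat.mod_lt σ hM)
  have hσ : (G.map (· ^ e)).sum + σ / M * M = σ := by
    rw [hGsum, mul_comm]; exact Nat.mod_add_div σ M
  have hlen_le_sum : G.length ≤ (G.map (· ^ e)).sum := by
    simpa using List.length_le_sum_of_one_le (G.map (· ^ e)) (by
      simp only [List.mem_map]
      rintro _ ⟨c, hc, rfl⟩
      exact Nat.one_le_pow _ _ (hGdig c hc).1)
  refine ⟨G ++ List.replicate (σ / M) (b - 1), ?_, ?_, ?_, ?_⟩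
  · intro c hc
    rcases List.mem_append.mp hc with hc | hc
    · have := hGdig c hc; omega
    · rw [List.eq_of_mem_replicate hc]; omega
  · simpa [List.sum_replicate] using hσ
  · rw [List.countP_append, List.countP_replicate]
    simpa using List.countP_le_length.trans hGlen
  · rw [List.length_append, List.length_replicate, add_mul]
    have hgM : G.length * M ≤ g * M := Nat.mul_le_mul_right _ hGlen
    have hM' : M ≤ g * M := Nat.le_mul_of_pos_left M hg
    rcases Nat.eq_zero_or_pos G.length with h0 | hpos
    · rw [h0]; omega
    · omega

lemma base_mul_ofDigits_replicate_lt {g : ℕ} (hb : 2 ≤ b) (he : e ≠ 0) (hg : 1 ≤ g)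
    (hwaring : ∀ m : ℕ, ∃ f : Fin g → ℕ, ∑ i, f i ^ e = m) {a D z : ℕ} (ha : 0 < a) (hab : a < b)
    (hD : a = b - 1 ∨ D ≤ g) (hx : Nat.ofDigits b (List.replicate D a) ≠ D * a ^ e)
    (hz : D * a ^ e + g * (b - 1) ^ e ≤ S e b z) :
    b * Nat.ofDigits b (List.replicate D a) < z := by
  set x := Nat.ofDigits b (List.replicate D a)
  have hid : (b - 1) * x + a = a * b ^ D := sub_one_mul_ofDigits_replicate_add (by omega) a D
  have hxlt : x < b ^ D := by
    simpa using Nat.ofDigits_lt_base_pow_length (b := b) (l := List.replicate D a) (by omega)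
      fun c hc => by rw [List.eq_of_mem_replicate hc]; exact hab
  have hM : 1 ≤ (b - 1) ^ e := Nat.one_le_pow _ _ (by omega)
  by_contra! hzx
  rcases hD with rfl | hDg
  -- `x = b^D - 1`, and `b^(D+1) - 1` is the only `z < b^(D+1)` with `S z ≥ (D+1)(b-1)^e`.
  · have hx1 : x + 1 = b ^ D :=
      Nat.eq_of_mul_eq_mul_left (by omega : 0 < b - 1) (by rw [mul_add, mul_one, hid, mul_comm])
    have hz' : z = b ^ (D + 1) - 1 := by
      refine eq_pow_sub_one_of_mul_le_S hb he ?_ ?_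
      · rw [pow_succ']; nlinarith
      · nlinarith
    rw [pow_succ', ← hx1] at hz'
    have : b * x < b * (x + 1) - 1 := by rw [mul_add]; omega
    omega
  · have hbx : b * x < (a + 1) * b ^ D := by
      have : b * x = (b - 1) * x + x := by
        nth_rw 1 [show b = (b - 1) + 1 by omega]; ring
      nlinarith
    have hzD : z < b ^ (D + 1) := by
      rw [pow_succ']; nlinarith
    have htop : z / b ^ D ≤ a :=
      Nat.le_of_lt_succ ((Nat.div_lt_iff_lt_mul (by positivity)).mpr (by linarith))
    have hSz := S_le_of_lt_pow_succ hb he hzD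
    have htop_pow := Nat.pow_le_pow_left htop e
    have hpow : 1 ≤ a ^ e := Nat.one_le_pow _ _ ha
    have hD0 : D ≠ 0 := by rintro rfl; simp [x] at hx
    -- `z` has at most `D + 1` digits, the leading one `≤ a`: this leaves room only for `D = g = 1`,
    -- and then `e = 1` gives `x = a = σ`.
    obtain ⟨rfl, rfl⟩ : D = 1 ∧ g = 1 := by
      have hDM : D * (b - 1) ^ e ≤ g * (b - 1) ^ e := Nat.mul_le_mul_right _ hDg
      have hD1 : D * a ^ e ≤ 1 * a ^ e := by omega
      have hD1' : D = 1 := by have := Nat.le_of_mul_le_mul_right hD1 hpow; omega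
      subst hD1'
      have hg1 : g * (b - 1) ^ e ≤ 1 * (b - 1) ^ e := by omega
      exact ⟨rfl, by have := Nat.le_of_mul_le_mul_right hg1 hM; omega⟩
    obtain rfl := eq_one_of_forall_exists_pow_eq hwaring
    simp [x] at hx

lemma exists_lt_ne_S_eq {g : ℕ} (hb : 2 ≤ b) (he : e ≠ 0) (hg : 1 ≤ g)
    (hwaring : ∀ m : ℕ, ∃ f : Fin g → ℕ, ∑ i, f i ^ e = m) {u σ z : ℕ} (hσ : σ ≠ 0)
    (huσ : u ≠ σ) (hz : σ + g * (b - 1) ^ e ≤ S e b z) : ∃ y < z, y ≠ u ∧ S e b y = σ := by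
  obtain ⟨L, hLdig, hLsum, hLcount, hLlen⟩ := exists_digits_sum_pow_eq hb he hg hwaring σ
  have hxσ : S e b (Nat.ofDigits b L) = σ := by rw [S_ofDigits hb hLdig, hLsum]
  have hzL : b ^ L.length ≤ z := pow_le_of_mul_lt_S hb (hLlen.trans_le hz)
  have hxz : Nat.ofDigits b L < z :=
    (Nat.ofDigits_lt_base_pow_length (by omega) fun c hc => (hLdig c hc).2).trans_le hzL
  by_cases hxu : Nat.ofDigits b L ≠ u
  · exact ⟨_, hxz, hxu, hxσ⟩
  rw [not_not] at hxu
  subst hxu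
  by_cases hrot : L.rotate 1 = L
  · obtain ⟨a, hLa⟩ := List.rotate_one_eq_self_iff_eq_replicate.mp hrot
    generalize L.length = D at hLa
    subst hLa
    have hDa : D * a ^ e = σ := by simpa using hLsum
    have hD0 : D ≠ 0 := by rintro rfl; simp at hDa; omega
    have ha := hLdig a (List.mem_replicate.mpr ⟨hD0, rfl⟩)
    have hxpos : 0 < Nat.ofDigits b (List.replicate D a) := Nat.pos_of_ne_zero fun h0 => by
      rw [h0, S_zero] at hxσ; omega
    refine ⟨b * Nat.ofDigits b (List.replicate D a), ?_, by nlinarith, by rw [S_base_mul hb he, hxσ]⟩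
    refine base_mul_ofDigits_replicate_lt hb he hg hwaring ha.1 ha.2 ?_ (hDa ▸ huσ) (hDa ▸ hz)
    by_cases hab : a = b - 1
    · exact Or.inl hab
    · right; simpa [List.countP_replicate, hab] using hLcount
  · have hrdig : ∀ c ∈ L.rotate 1, 0 < c ∧ c < b := fun c hc => hLdig c (List.mem_rotate.mp hc)
    refine ⟨Nat.ofDigits b (L.rotate 1), ?_, fun h => hrot ?_, ?_⟩
    · refine lt_of_lt_of_le ?_ hzL
      simpa using Nat.ofDigits_lt_base_pow_length (by omega) fun c hc => (hrdig c hc).2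
    · rw [← digits_ofDigits_of_pos hb hrdig, h, digits_ofDigits_of_pos hb hLdig]
    · rw [S_ofDigits hb hrdig, ((List.rotate_perm L 1).map _).sum_eq, hLsum]

lemma IsHeightAttracted.S_of_succ {u h x : ℕ} (hx : IsHeightAttracted e b u (h + 1) x) :
    IsHeightAttracted e b u h (S e b x) := by
  refine ⟨S_pos hx.1.ne', ?_, fun n hn => ?_⟩
  · simpa [Function.iterate_succ_apply] using hx.2.1
  · simpa [Function.iterate_succ_apply] using hx.2.2 (n + 1) (by omega)

lemma IsHeightAttracted.succ_of_S_eq {u h σ y : ℕ} (hσ : IsHeightAttracted e b u h σ)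
    (hyu : y ≠ u) (hy : S e b y = σ) : IsHeightAttracted e b u (h + 1) y := by
  refine ⟨Nat.pos_of_ne_zero ?_, by rw [Function.iterate_succ_apply, hy]; exact hσ.2.1, ?_⟩
  · rintro rfl
    rw [S_zero] at hy
    exact hσ.1.ne hy
  · rintro (_ | n) hn
    · exact hyu
    · rw [Function.iterate_succ_apply, hy]; exact hσ.2.2 n (by omega)

theorem stmt_2_general (b e u g h σ τ : ℕ) (hb : 2 ≤ b) (he : 1 ≤ e) (hg : 1 ≤ g)
    (hh : 1 ≤ h)
    (hwaring : ∀ m : ℕ, ∃ f : Fin g → ℕ, ∑ i, (f i) ^ e = m)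
    (hσ : IsHeightAttracted e b u h σ)
    (hσmin : ∀ z : ℕ, IsHeightAttracted e b u h z → σ ≤ z)
    (hτmin : ∀ z : ℕ, IsHeightAttracted e b u h z → σ < z → τ ≤ z)
    (hgap : σ + g * (b - 1) ^ e ≤ τ) :
    ∃ σ' : ℕ, IsHeightAttracted e b u (h + 1) σ' ∧
      (∀ z : ℕ, IsHeightAttracted e b u (h + 1) z → σ' ≤ z) ∧
      S e b σ' = σ := by
  classical
  have he0 : e ≠ 0 := by omega
  have hσu : σ ≠ u := by simpa using hσ.2.2 0 hh
  have hex : ∃ z, IsHeightAttracted e b u (h + 1) z := by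
    obtain ⟨y, hyu, hy⟩ := exists_ne_S_eq hb he0 hσ.1.ne' u
    exact ⟨y, hσ.succ_of_S_eq hyu hy⟩
  refine ⟨Nat.find hex, Nat.find_spec hex, fun z hz => Nat.find_min' hex hz, ?_⟩
  have ht := (Nat.find_spec hex).S_of_succ
  by_contra hne
  have hτt := hτmin _ ht (lt_of_le_of_ne (hσmin _ ht) (Ne.symm hne))
  obtain ⟨y, hy, hyu, hyσ⟩ :=
    exists_lt_ne_S_eq hb he0 hg hwaring hσ.1.ne' hσu.symm (hgap.trans hτt)
  exact Nat.find_min hex hy (hσ.succ_of_S_eq hyu hyσ)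

theorem stmt_2 (b e u g h σ τ : ℕ) (hb : 2 ≤ b) (he : 1 ≤ e) (hu : 1 ≤ u) (hg : 1 ≤ g)
    (hh : 1 ≤ h)
    (hwaring : ∀ m : ℕ, ∃ f : Fin g → ℕ, ∑ i, (f i) ^ e = m)
    (hσ : IsHeightAttracted e b u h σ)
    (hσmin : ∀ z : ℕ, IsHeightAttracted e b u h z → σ ≤ z)
    (hτ : IsHeightAttracted e b u h τ) (hστ : σ < τ)
    (hτmin : ∀ z : ℕ, IsHeightAttracted e b u h z → σ < z → τ ≤ z)
    (hgap : σ + g * (b - 1) ^ e ≤ τ) :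
    ∃ σ' : ℕ, IsHeightAttracted e b u (h + 1) σ' ∧
      (∀ z : ℕ, IsHeightAttracted e b u (h + 1) z → σ' ≤ z) ∧
      S e b σ' = σ :=
  stmt_2_general b e u g h σ τ hb he hg hh hwaring hσ hσmin hτmin hgap
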